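/- arXiv:1812.07532 — 5 statements merged into one kernel-verified Lean document; each statement's English description precedes it below -/
import Mathlib

section
/- Let u₁,…,u_k be non-zero vectors in ℝ² such that the angle between any pair u_i, u_j is at most α for some α ∈ [0, 2π/3). Then |∑_{j=1}^k u_j| ≥ cos(α/2) · ∑_{j=1}^k |u_j|. -/
/-!
Pairwise angles at most `α < 2π/3` force the vectors into a cone of half-angle `α/2`. Measured
from one of the vectors, all arguments lie in `[-α, α]`; since `3α < 2π`, the difference of two
such arguments is the true signed angle between the vectors, so the arguments span an interval of
length at most `α`, whose midpoint is the axis `e` of the cone. Then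
`⟪u j, e⟫ ≥ cos (α/2) ‖u j‖ ‖e‖`, and summing against Cauchy–Schwarz gives the bound.
-/

open InnerProductGeometry Module Real

theorem Real.Angle.eq_of_coe_eq_of_abs_sub_lt {x y : ℝ} (h : (x : Angle) = y)
    (hxy : |x - y| < 2 * π) : x = y := by
  obtain ⟨n, hn⟩ := Angle.angle_eq_iff_two_pi_dvd_sub.1 h
  have hn1 : |(n : ℝ)| < 1 := by
    rw [hn, abs_mul, abs_of_pos two_pi_pos] at hxy
    exact (mul_lt_iff_lt_one_right two_pi_pos).1 hxy
  have hn0 : n = 0 := by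
    rw [← Int.cast_abs] at hn1
    exact Int.abs_lt_one_iff.1 (by exact_mod_cast hn1)
  rw [hn0, Int.cast_zero, mul_zero, sub_eq_zero] at hn
  exact hn

namespace Complex

theorem arg_div_eq_arg_sub_arg_of_abs_le {z w : ℂ} {α : ℝ} (hz : z ≠ 0) (hw : w ≠ 0)
    (hα : α < 2 * π / 3) (hzα : |arg z| ≤ α) (hwα : |arg w| ≤ α)
    (hzwα : |arg (z / w)| ≤ α) : arg (z / w) = arg z - arg w := by
  refine Angle.eq_of_coe_eq_of_abs_sub_lt (by rw [arg_div_coe_angle hz hw, Angle.coe_sub]) ?_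
  rw [abs_le] at hzα hwα hzwα
  rw [abs_lt]
  constructor <;> linarith

theorem angle_exp_mul_I_eq_abs_arg_sub {z : ℂ} {c : ℝ} (hz : z ≠ 0)
    (hc : arg z - c ∈ Set.Ioc (-π) π) : angle z (exp (c * I)) = |arg z - c| := by
  have hnorm : 0 < ‖z‖ := norm_pos_iff.2 hz
  conv_lhs => rw [← norm_mul_exp_arg_mul_I z, ← real_smul, angle_smul_left_of_pos _ _ hnorm]
  rw [angle_exp_exp, (toIocMod_eq_self two_pi_pos).2 ⟨hc.1, by linarith [hc.2]⟩]

theorem exists_angle_le_half_of_pairwise_angle_le {ι : Type*} [Finite ι] {v : ι → ℂ}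
    (hv : ∀ i, v i ≠ 0) {α : ℝ} (hα : α < 2 * π / 3) (hang : ∀ i j, angle (v i) (v j) ≤ α) :
    ∃ e ≠ 0, ∀ j, angle (v j) e ≤ α / 2 := by
  rcases isEmpty_or_nonempty ι with hι | hι
  · exact ⟨1, one_ne_zero, isEmptyElim⟩
  obtain i₀ : ι := Classical.arbitrary ι
  set w : ι → ℂ := fun j => v j / v i₀
  set θ : ι → ℝ := fun j => arg (w j)
  have hw : ∀ j, w j ≠ 0 := fun j => div_ne_zero (hv j) (hv i₀)
  have hwang : ∀ i j, |arg (w i / w j)| ≤ α := fun i j => by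
    rw [← angle_eq_abs_arg (hw i) (hw j)]
    simpa only [w, div_eq_mul_inv, angle_mul_right (inv_ne_zero (hv i₀))] using hang i j
  have hθ : ∀ j, |θ j| ≤ α := fun j => by
    simpa only [θ, div_one, w, div_self (hv i₀)] using hwang j i₀
  have spread : ∀ i j, θ i - θ j ≤ α := fun i j => by
    rw [← arg_div_eq_arg_sub_arg_of_abs_le (hw i) (hw j) hα (hθ i) (hθ j) (hwang i j)]
    exact (le_abs_self _).trans (hwang i j)
  obtain ⟨iM, hiM⟩ := Finite.exists_max θ
  obtain ⟨im, him⟩ := Finite.exists_min θ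
  obtain ⟨c, hc⟩ : ∃ c, ∀ j, |θ j - c| ≤ α / 2 := ⟨(θ iM + θ im) / 2, fun j => by
    rw [abs_le]
    constructor <;> linarith [hiM j, him j, spread iM im]⟩
  refine ⟨exp (c * I) * v i₀, mul_ne_zero (exp_ne_zero _) (hv i₀), fun j => ?_⟩
  have hcπ : θ j - c ∈ Set.Ioc (-π) π := by
    have := abs_le.1 (hc j)
    constructor <;> linarith [pi_pos]
  rw [← div_mul_cancel₀ (v j) (hv i₀), angle_mul_right (hv i₀),
    angle_exp_mul_I_eq_abs_arg_sub (hw j) hcπ]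
  exact hc j

end Complex

theorem exists_angle_le_half_of_pairwise_angle_le {F : Type*} [NormedAddCommGroup F]
    [InnerProductSpace ℝ F] [Fact (finrank ℝ F = 2)] {ι : Type*} [Finite ι] {u : ι → F}
    (hu : ∀ i, u i ≠ 0) {α : ℝ} (hα : α < 2 * π / 3) (hang : ∀ i j, angle (u i) (u j) ≤ α) :
    ∃ e ≠ 0, ∀ j, angle (u j) e ≤ α / 2 := by
  have := FiniteDimensional.of_fact_finrank_eq_two (K := ℝ) (V := F)
  set f : ℂ ≃ₗᵢ[ℝ] F := Complex.isometryOfOrthonormal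
    ((stdOrthonormalBasis ℝ F).reindex (finCongr Fact.out))
  have hf : ∀ x y, angle (f x) (f y) = angle x y := f.toLinearIsometry.angle_map
  obtain ⟨e, he, hue⟩ := Complex.exists_angle_le_half_of_pairwise_angle_le
    (v := fun i => f.symm (u i)) (fun i => by simpa using hu i) hα
    (fun i j => by simpa only [← hf, f.apply_symm_apply] using hang i j)
  refine ⟨f e, by simpa using he, fun j => ?_⟩
  simpa only [← hf, f.apply_symm_apply] using hue j

theorem cos_mul_sum_norm_le_norm_sum {E : Type*} [NormedAddCommGroup E] [InnerProductSpace ℝ E]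
    {ι : Type*} (s : Finset ι) (u : ι → E) {e : E} (he : e ≠ 0) {β : ℝ} (hβ : β ≤ π)
    (h : ∀ j ∈ s, angle (u j) e ≤ β) : cos β * ∑ j ∈ s, ‖u j‖ ≤ ‖∑ j ∈ s, u j‖ := by
  have hcos : ∀ j ∈ s, cos β * ‖u j‖ * ‖e‖ ≤ inner ℝ (u j) e := fun j hj => by
    rw [← cos_angle_mul_norm_mul_norm, mul_assoc]
    exact mul_le_mul_of_nonneg_right
      (cos_le_cos_of_nonneg_of_le_pi (angle_nonneg _ _) hβ (h j hj)) (by positivity)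
  refine le_of_mul_le_mul_right ?_ (norm_pos_iff.2 he)
  calc (cos β * ∑ j ∈ s, ‖u j‖) * ‖e‖ = ∑ j ∈ s, cos β * ‖u j‖ * ‖e‖ := by
        rw [Finset.mul_sum, Finset.sum_mul]
    _ ≤ ∑ j ∈ s, inner ℝ (u j) e := Finset.sum_le_sum hcos
    _ = inner ℝ (∑ j ∈ s, u j) e := (sum_inner s u e).symm
    _ ≤ ‖∑ j ∈ s, u j‖ * ‖e‖ := real_inner_le_norm _ _

theorem barvinok_vector_sum_general (k : ℕ) (u : Fin k → EuclideanSpace ℝ (Fin 2))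
    (hu : ∀ j, u j ≠ 0) (α : ℝ) (hα : α < 2 * Real.pi / 3)
    (hang : ∀ i j, angle (u i) (u j) ≤ α) :
    Real.cos (α / 2) * ∑ j, ‖u j‖ ≤ ‖∑ j, u j‖ := by
  have : Fact (finrank ℝ (EuclideanSpace ℝ (Fin 2)) = 2) := ⟨finrank_euclideanSpace_fin⟩
  obtain ⟨e, he, hue⟩ := exists_angle_le_half_of_pairwise_angle_le hu hα hang
  exact cos_mul_sum_norm_le_norm_sum _ u he (by linarith [pi_pos]) fun j _ => hue j

theorem barvinok_vector_sum (k : ℕ) (u : Fin k → EuclideanSpace ℝ (Fin 2))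
    (hu : ∀ j, u j ≠ 0) (α : ℝ) (hα0 : 0 ≤ α) (hα : α < 2 * Real.pi / 3)
    (hang : ∀ i j, angle (u i) (u j) ≤ α) :
    Real.cos (α / 2) * ∑ j, ‖u j‖ ≤ ‖∑ j, u j‖ :=
  barvinok_vector_sum_general k u hu α hα hang
end

section
/- Let u, u' be non-zero vectors in ℝ² and r ≥ 1 a real number such that the angle between u and u' is at most φ for some φ < π/3, and r⁻¹ ≤ |u|/|u'| ≤ r. Then |u - u'| ≤ max(2 sin(φ/2), √(1 + r⁻² - 2 r⁻¹ cos φ)) · max(|u|, |u'|). -/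
/-!
By the law of cosines, `‖u - u'‖² ≤ a² + b² - 2 a b cos φ` where `a ≤ b` are the two norms.
Writing `a = t b`, the ratio hypothesis puts `t` in `[r⁻¹, 1]`, and `1 + t² - 2 t cos φ` is convex
in `t`, so it is at most its value at an endpoint: `2 - 2 cos φ = (2 sin (φ / 2))²` at `t = 1`,
or `1 + r⁻² - 2 r⁻¹ cos φ` at `t = r⁻¹`.
-/

open InnerProductGeometry Real

lemma sq_add_sq_sub_two_mul_mul_le_max {k c a b : ℝ} (hb : 0 ≤ b) (hca : c * b ≤ a)
    (hab : a ≤ b) :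
    a ^ 2 + b ^ 2 - 2 * k * a * b ≤ max (2 - 2 * k) (1 + c ^ 2 - 2 * c * k) * b ^ 2 := by
  -- `a ∈ [c b, b]` bounds `a ^ 2` by a chord, leaving an expression affine in `a`.
  have hchord : a ^ 2 ≤ (c + 1) * a * b - c * b ^ 2 := by
    nlinarith [mul_nonneg (sub_nonneg.2 hca) (sub_nonneg.2 hab)]
  rcases le_total 0 (c + 1 - 2 * k) with hk | hk
  · calc a ^ 2 + b ^ 2 - 2 * k * a * b ≤ (2 - 2 * k) * b ^ 2 := by
          nlinarith [mul_le_mul_of_nonneg_left hab (mul_nonneg hb hk)]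
      _ ≤ _ := by gcongr; exact le_max_left _ _
  · calc a ^ 2 + b ^ 2 - 2 * k * a * b ≤ (1 + c ^ 2 - 2 * c * k) * b ^ 2 := by
          nlinarith [mul_le_mul_of_nonpos_left hca (mul_nonpos_of_nonneg_of_nonpos hb hk)]
      _ ≤ _ := by gcongr; exact le_max_right _ _

lemma sqrt_two_sub_two_mul_cos {φ : ℝ} (h0 : 0 ≤ φ) (h2π : φ ≤ 2 * π) :
    √(2 - 2 * cos φ) = 2 * sin (φ / 2) := by
  have hsin : 0 ≤ sin (φ / 2) := sin_nonneg_of_nonneg_of_le_pi (by linarith) (by linarith)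
  rw [← sqrt_sq (by positivity : 0 ≤ 2 * sin (φ / 2))]
  congr 1
  rw [show φ = 2 * (φ / 2) by ring, cos_two_mul_eq_one_sub, show 2 * (φ / 2) / 2 = φ / 2 by ring]
  ring

lemma inv_mul_max_le_min_of_div_mem_Icc {a b r : ℝ} (hb : 0 < b) (hr : 0 < r)
    (hlow : r⁻¹ ≤ a / b) (hhigh : a / b ≤ r) : r⁻¹ * max a b ≤ min a b := by
  rw [le_div_iff₀ hb] at hlow
  rw [div_le_iff₀ hb] at hhigh
  rcases le_total a b with h | h
  · rwa [max_eq_right h, min_eq_left h]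
  · rw [max_eq_left h, min_eq_right h, inv_mul_le_iff₀ hr]
    linarith

section

variable {V : Type*} [NormedAddCommGroup V] [InnerProductSpace ℝ V]

lemma norm_sub_sq_le_of_angle_le {u v : V} {φ : ℝ} (hφπ : φ ≤ π) (hang : angle u v ≤ φ) :
    ‖u - v‖ ^ 2 ≤ ‖u‖ ^ 2 + ‖v‖ ^ 2 - 2 * cos φ * ‖u‖ * ‖v‖ := by
  have hcos : cos φ ≤ cos (angle u v) :=
    cos_le_cos_of_nonneg_of_le_pi (angle_nonneg u v) hφπ hang
  have hlaw := norm_sub_sq_eq_norm_sq_add_norm_sq_sub_two_mul_norm_mul_norm_mul_cos_angle u v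
  nlinarith [mul_nonneg (norm_nonneg u) (norm_nonneg v)]

lemma norm_sub_le_of_angle_le_of_mul_max_le_min {u v : V} {φ c : ℝ} (hφ0 : 0 ≤ φ)
    (hφπ : φ ≤ π) (hang : angle u v ≤ φ) (hc : c * max ‖u‖ ‖v‖ ≤ min ‖u‖ ‖v‖) :
    ‖u - v‖ ≤ max (2 * sin (φ / 2)) √(1 + c ^ 2 - 2 * c * cos φ) * max ‖u‖ ‖v‖ := by
  set m := min ‖u‖ ‖v‖
  set M := max ‖u‖ ‖v‖
  have hM : 0 ≤ M := (norm_nonneg u).trans (le_max_left _ _)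
  have hsymm : ‖u‖ ^ 2 + ‖v‖ ^ 2 - 2 * cos φ * ‖u‖ * ‖v‖ = m ^ 2 + M ^ 2 - 2 * cos φ * m * M := by
    rcases le_total ‖u‖ ‖v‖ with h | h
    · simp only [m, M, min_eq_left h, max_eq_right h]
    · simp only [m, M, min_eq_right h, max_eq_left h]; ring
  have hsq : ‖u - v‖ ^ 2 ≤ max (2 - 2 * cos φ) (1 + c ^ 2 - 2 * c * cos φ) * M ^ 2 :=
    (norm_sub_sq_le_of_angle_le hφπ hang).trans_eq hsymm |>.trans
      (sq_add_sq_sub_two_mul_mul_le_max hM hc min_le_max)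
  calc ‖u - v‖ = √(‖u - v‖ ^ 2) := (sqrt_sq (norm_nonneg _)).symm
    _ ≤ √(max (2 - 2 * cos φ) (1 + c ^ 2 - 2 * c * cos φ) * M ^ 2) := sqrt_le_sqrt hsq
    _ = max (2 * sin (φ / 2)) √(1 + c ^ 2 - 2 * c * cos φ) * M := by
      rw [sqrt_mul' _ (sq_nonneg M), sqrt_sq hM,
        Real.sqrt_monotone.map_max, sqrt_two_sub_two_mul_cos hφ0 (by linarith [pi_pos])]

end

theorem diff_le_of_angle_and_ratio_general (u u' : EuclideanSpace ℝ (Fin 2))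
    (hu' : u' ≠ 0) (r φ : ℝ) (hr : 1 ≤ r)
    (hφ0 : 0 ≤ φ) (hφ : φ < Real.pi / 3)
    (hang : angle u u' ≤ φ)
    (hlow : r⁻¹ ≤ ‖u‖ / ‖u'‖) (hhigh : ‖u‖ / ‖u'‖ ≤ r) :
    ‖u - u'‖ ≤
      max (2 * Real.sin (φ / 2)) (Real.sqrt (1 + r⁻¹ ^ 2 - 2 * r⁻¹ * Real.cos φ)) *
        max ‖u‖ ‖u'‖ :=
  norm_sub_le_of_angle_le_of_mul_max_le_min hφ0 (by linarith [pi_pos]) hang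
    (inv_mul_max_le_min_of_div_mem_Icc (norm_pos_iff.2 hu') (by linarith) hlow hhigh)

theorem diff_le_of_angle_and_ratio (u u' : EuclideanSpace ℝ (Fin 2))
    (hu : u ≠ 0) (hu' : u' ≠ 0) (r φ : ℝ) (hr : 1 ≤ r)
    (hφ0 : 0 ≤ φ) (hφ : φ < Real.pi / 3)
    (hang : angle u u' ≤ φ)
    (hlow : r⁻¹ ≤ ‖u‖ / ‖u'‖) (hhigh : ‖u‖ / ‖u'‖ ≤ r) :
    ‖u - u'‖ ≤
      max (2 * Real.sin (φ / 2)) (Real.sqrt (1 + r⁻¹ ^ 2 - 2 * r⁻¹ * Real.cos φ)) *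
        max ‖u‖ ‖u'‖ :=
  diff_le_of_angle_and_ratio_general u u' hu' r φ hr hφ0 hφ hang hlow hhigh
end

section
/- Let Δ ≥ 3 be an integer and let k ≥ e·Δ + 1 be a real number. Then for every d ∈ {0, 1, …, Δ−1}, with K = 1/Δ, we have 1/((k + d − Δ)·(1 − K)^d) < K, equivalently Δ·(Δ/(Δ-1))^d − d < k − Δ. -/
/-!
Since `(1 - 1/Δ)⁻¹ = 1 + 1/(Δ - 1)`, the claim is `Δ (1 + 1/(Δ - 1))^d < k + d - Δ`. With
`t = d/(Δ - 1) ∈ [0, 1]`, `(1 + 1/(Δ - 1))^d ≤ exp t ≤ 1 + (e - 1) t` by convexity of `exp`, and this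
bound, linear in `d`, is at most `k + d - Δ` at both ends `d = 0` and `d = Δ - 1`. Strictness comes
from `1 + x < exp x` when `d > 0` and from `e > 2` when `d = 0`.
-/

open Real

lemma Real.exp_le_one_add_mul_of_mem_Icc {t : ℝ} (h0 : 0 ≤ t) (h1 : t ≤ 1) :
    exp t ≤ 1 + (exp 1 - 1) * t := by
  have h := convexOn_exp.2 (Set.mem_univ 0) (Set.mem_univ 1) (sub_nonneg.2 h1) h0 (by ring)
  simp only [smul_eq_mul, mul_zero, mul_one, zero_add, exp_zero] at h
  linarith

lemma one_add_pow_lt_one_add_mul {a : ℝ} (ha : 0 < a) {d : ℕ} (hd : 0 < d) (hda : d * a ≤ 1) :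
    (1 + a) ^ d < 1 + (exp 1 - 1) * (d * a) :=
  calc (1 + a) ^ d < exp a ^ d := by
        gcongr
        linarith [add_one_lt_exp ha.ne']
    _ = exp (d * a) := (exp_nat_mul a d).symm
    _ ≤ 1 + (exp 1 - 1) * (d * a) := exp_le_one_add_mul_of_mem_Icc (by positivity) hda

lemma mul_one_add_inv_sub_one_pow_lt {D k : ℝ} (hD : 1 < D) (hk : exp 1 * D + 1 ≤ k) {d : ℕ}
    (hd : (d : ℝ) ≤ D - 1) : D * (1 + (D - 1)⁻¹) ^ d < k + d - D := by
  have he : 2 < exp 1 := by linarith [add_one_lt_exp one_ne_zero]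
  rcases Nat.eq_zero_or_pos d with rfl | hd0
  · simp only [pow_zero, mul_one, Nat.cast_zero, add_zero]
    nlinarith
  have hD1 : D - 1 ≠ 0 := (sub_pos.2 hD).ne'
  set t := (d : ℝ) * (D - 1)⁻¹
  have hDt : D * t = d + t := by
    simp only [t]
    field_simp
    ring
  have ht : t ≤ 1 := by
    simp only [t]
    rw [← div_eq_mul_inv, div_le_one (by linarith)]
    exact hd
  calc D * (1 + (D - 1)⁻¹) ^ d < D * (1 + (exp 1 - 1) * t) := by
        have := one_add_pow_lt_one_add_mul (inv_pos.2 (sub_pos.2 hD)) hd0 ht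
        gcongr
    _ = D + (exp 1 - 1) * (d + t) := by rw [← hDt]; ring
    _ ≤ k + d - D := by nlinarith

theorem condition_holds (Δ : ℕ) (hΔ : 3 ≤ Δ) (k : ℝ)
    (hk : Real.exp 1 * Δ + 1 ≤ k) (d : ℕ) (hd : d < Δ) :
    1 / ((k + d - Δ) * (1 - 1 / (Δ : ℝ)) ^ d) < 1 / (Δ : ℝ) := by
  have hΔ1 : (1 : ℝ) < Δ := by exact_mod_cast (by omega : 1 < Δ)
  have hdΔ : (d : ℝ) ≤ Δ - 1 := by
    rw [le_sub_iff_add_le]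
    exact_mod_cast hd
  have hkey := mul_one_add_inv_sub_one_pow_lt hΔ1 hk hdΔ
  have hinv : (1 + ((Δ : ℝ) - 1)⁻¹) * (1 - 1 / (Δ : ℝ)) = 1 := by
    have : (Δ : ℝ) - 1 ≠ 0 := (sub_pos.2 hΔ1).ne'
    field_simp
    ring
  apply one_div_lt_one_div_of_lt (by linarith)
  calc (Δ : ℝ) = Δ * (1 + ((Δ : ℝ) - 1)⁻¹) ^ d * (1 - 1 / (Δ : ℝ)) ^ d := by
        rw [mul_assoc, ← mul_pow, hinv, one_pow, mul_one]
    _ < (k + d - Δ) * (1 - 1 / (Δ : ℝ)) ^ d := by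
        gcongr
        refine pow_pos ?_ d
        rw [sub_pos, div_lt_one (by linarith)]
        exact hΔ1
end

section
/- Let Δ ≥ 3 be an integer and k ≥ e·Δ + 1 a real number. Then there exists ε ∈ (0,1) such that with K = 1/Δ, for each d = 0,…,Δ−1 with b = Δ−d, one has 0 < (1+ε)²/((k−b)(1−K)^d − εb) ≤ K, and additionally arcsin(K) ≤ π/(3(Δ−1+ε)). -/
/-!
For `k ≥ 2Δ - 1` the quantity `(k - Δ + d) (1 - 1/Δ)^d` decreases in `d`, so over `d < Δ` it is
at least `(k - 1) (1 - 1/Δ)^(Δ-1) ≥ eΔ (1 - 1/Δ)^(Δ-1)`, which exceeds `Δ` strictly because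
`(1 + 1/m)^m < e`. Any `ε` small enough that `Δ (1 + ε)^2 + εΔ` stays below this minimum works.
The arcsine bound needs only `ε ≤ 1`: concavity of `sin` on `[0, π]` gives `sin (π/(3Δ)) ≥ 1/Δ`.
-/

open Real Filter Topology

theorem one_add_one_div_pow_lt_exp_one {m : ℕ} (hm : m ≠ 0) : (1 + 1 / (m : ℝ)) ^ m < exp 1 := by
  have hm' : (m : ℝ) ≠ 0 := Nat.cast_ne_zero.2 hm
  calc (1 + 1 / (m : ℝ)) ^ m < exp (1 / m) ^ m := by
        gcongr
        linarith [add_one_lt_exp (one_div_ne_zero hm')]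
    _ = exp 1 := by rw [← exp_nat_mul, mul_one_div_cancel hm']

theorem exp_neg_one_lt_one_sub_one_div_pow {n : ℕ} (hn : 2 ≤ n) :
    exp (-1) < (1 - 1 / (n : ℝ)) ^ (n - 1) := by
  obtain ⟨m, rfl⟩ : ∃ m, n = m + 1 := ⟨n - 1, by omega⟩
  have hm : m ≠ 0 := by omega
  have hm' : (m : ℝ) ≠ 0 := Nat.cast_ne_zero.2 hm
  have hbase : 1 - 1 / ((m + 1 : ℕ) : ℝ) = (1 + 1 / (m : ℝ))⁻¹ := by
    push_cast; field_simp; ring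
  rw [hbase, Nat.add_sub_cancel, inv_pow, exp_neg]
  exact inv_strictAnti₀ (by positivity) (one_add_one_div_pow_lt_exp_one hm)

theorem add_mul_one_sub_pow_le {a x : ℝ} (hx0 : 0 ≤ x) (hx1 : x ≤ 1) (ha : 1 - x ≤ a * x) :
    ∀ j : ℕ, (a + j) * (1 - x) ^ j ≤ a
  | 0 => by simp
  | j + 1 => by
    have hstep : (a + (j + 1 : ℕ)) * (1 - x) ≤ a + j := by
      push_cast
      nlinarith [mul_nonneg (Nat.cast_nonneg j : (0 : ℝ) ≤ j) hx0]
    calc (a + (j + 1 : ℕ)) * (1 - x) ^ (j + 1)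
        = (a + (j + 1 : ℕ)) * (1 - x) * (1 - x) ^ j := by ring
      _ ≤ (a + j) * (1 - x) ^ j := by gcongr
      _ ≤ a := add_mul_one_sub_pow_le hx0 hx1 ha j

theorem le_sin_pi_div_six_mul {x : ℝ} (hx0 : 0 ≤ x) (hx1 : x ≤ 1) :
    x / 2 ≤ sin (π / 6 * x) := by
  have h := strictConcaveOn_sin_Icc.concaveOn.2 ⟨le_rfl, pi_pos.le⟩
    (show π / 6 ∈ Set.Icc 0 π from ⟨by positivity, by linarith [pi_pos]⟩) (sub_nonneg.2 hx1) hx0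
  rw [sin_pi_div_six] at h
  simpa [mul_comm x, div_eq_mul_inv] using h

theorem arcsin_one_div_le {n : ℝ} (hn : 2 ≤ n) : arcsin (1 / n) ≤ π / (3 * n) := by
  have hsin : 1 / n ≤ sin (π / (3 * n)) := by
    convert le_sin_pi_div_six_mul (x := 2 / n) (by positivity)
      ((div_le_one (by linarith)).2 hn) using 1
    · field_simp
    · congr 1; field_simp; ring
  have hn0 : 0 < n := by linarith
  refine (arcsin_le_iff_le_sin ⟨by linarith [one_div_pos.2 hn0], (div_le_one hn0).2 (by linarith)⟩
    ⟨by linarith [pi_pos, div_pos pi_pos (by linarith : 0 < 3 * n)], ?_⟩).2 hsin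
  rw [div_le_div_iff₀ (by positivity) two_pos]
  nlinarith [pi_pos]

theorem sub_one_mul_one_sub_one_div_pow_le {n d : ℕ} {k : ℝ} (hk : 2 * n - 1 ≤ k) (hd : d < n) :
    (k - 1) * (1 - 1 / (n : ℝ)) ^ (n - 1) ≤ (k - (n - d)) * (1 - 1 / (n : ℝ)) ^ d := by
  have hn : (1 : ℝ) ≤ n := by exact_mod_cast hd.trans_le' (Nat.zero_le d)
  have hcast : ((n - 1 - d : ℕ) : ℝ) = n - 1 - d := by
    rw [Nat.cast_sub (by omega), Nat.cast_sub (by omega)]; simp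
  have hshift := add_mul_one_sub_pow_le (a := k - (n - d)) (x := 1 / n) (by positivity)
    ((div_le_one (by linarith)).2 hn) ?_ (n - 1 - d)
  · rw [hcast, show k - (n - d) + (n - 1 - d) = k - 1 by ring] at hshift
    calc (k - 1) * (1 - 1 / (n : ℝ)) ^ (n - 1)
        = (k - 1) * (1 - 1 / (n : ℝ)) ^ (n - 1 - d) * (1 - 1 / (n : ℝ)) ^ d := by
          rw [mul_assoc, ← pow_add, Nat.sub_add_cancel (by omega)]
      _ ≤ (k - (n - d)) * (1 - 1 / (n : ℝ)) ^ d := by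
          gcongr
          exact pow_nonneg (sub_nonneg.2 ((div_le_one (by linarith)).2 hn)) d
  · have hd' : (d : ℝ) + 1 ≤ n := by exact_mod_cast hd
    rw [← mul_div_assoc, mul_one, le_div_iff₀ (by linarith), sub_mul, div_mul_cancel₀ _ (by linarith)]
    linarith

theorem exists_epsilon (Δ : ℕ) (hΔ : 3 ≤ Δ) (k : ℝ) (hk : Real.exp 1 * Δ + 1 ≤ k) :
    ∃ ε : ℝ, 0 < ε ∧ ε < 1 ∧
      (∀ d : ℕ, d < Δ →
        0 < (1 + ε) ^ 2 / ((k - ((Δ : ℝ) - d)) * (1 - 1 / (Δ : ℝ)) ^ d - ε * ((Δ : ℝ) - d)) ∧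
        (1 + ε) ^ 2 / ((k - ((Δ : ℝ) - d)) * (1 - 1 / (Δ : ℝ)) ^ d - ε * ((Δ : ℝ) - d))
          ≤ 1 / (Δ : ℝ)) ∧
      Real.arcsin (1 / (Δ : ℝ)) ≤ Real.pi / (3 * ((Δ : ℝ) - 1 + ε)) := by
  have hΔ2 : (2 : ℝ) ≤ Δ := by exact_mod_cast (by omega : 2 ≤ Δ)
  have he : (2 : ℝ) ≤ exp 1 := by linarith [add_one_le_exp 1]
  have hL : (Δ : ℝ) < (k - 1) * (1 - 1 / (Δ : ℝ)) ^ (Δ - 1) :=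
    calc (Δ : ℝ) = exp 1 * Δ * exp (-1) := by rw [exp_neg]; field_simp
      _ < exp 1 * Δ * (1 - 1 / (Δ : ℝ)) ^ (Δ - 1) := by
          gcongr; exact exp_neg_one_lt_one_sub_one_div_pow (by omega)
      _ ≤ (k - 1) * (1 - 1 / (Δ : ℝ)) ^ (Δ - 1) := by
          have hq : 0 ≤ 1 - 1 / (Δ : ℝ) := sub_nonneg.2 ((div_le_one (by linarith)).2 (by linarith))
          gcongr
          linarith
  have hlim : Tendsto (fun ε : ℝ => (Δ : ℝ) * (1 + ε) ^ 2 + ε * Δ) (𝓝[>] 0) (𝓝 (Δ : ℝ)) := by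
    have hcont : Continuous fun ε : ℝ => (Δ : ℝ) * (1 + ε) ^ 2 + ε * Δ := by fun_prop
    simpa using (hcont.tendsto 0).mono_left nhdsWithin_le_nhds
  obtain ⟨ε, hεL, hε0, hε1⟩ :=
    ((hlim.eventually (gt_mem_nhds hL)).and (Ioo_mem_nhdsGT one_pos)).exists
  refine ⟨ε, hε0, hε1, fun d hd => ?_, ?_⟩
  · have hdecay := sub_one_mul_one_sub_one_div_pow_le (k := k) (by nlinarith) hd
    have hb : ε * (Δ - d) ≤ ε * Δ := by gcongr; exact sub_le_self _ (Nat.cast_nonneg d)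
    have hD : Δ * (1 + ε) ^ 2 ≤ (k - (Δ - d)) * (1 - 1 / (Δ : ℝ)) ^ d - ε * (Δ - d) := by
      linarith
    have hD0 : 0 < (k - (Δ - d)) * (1 - 1 / (Δ : ℝ)) ^ d - ε * (Δ - d) :=
      (by positivity : (0 : ℝ) < Δ * (1 + ε) ^ 2).trans_le hD
    exact ⟨div_pos (by positivity) hD0, (div_le_div_iff₀ hD0 (by positivity)).2 (by linarith)⟩
  · calc arcsin (1 / (Δ : ℝ)) ≤ π / (3 * Δ) := arcsin_one_div_le hΔ2
      _ ≤ π / (3 * ((Δ : ℝ) - 1 + ε)) := by gcongr <;> linarith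
end

section
/- Let G = (V,E) be a finite simple graph with a vertex u of degree 1 whose unique neighbour is v, let k be a positive integer and w : E → ℂ. For colours ℓ ≠ ℓ' in [k], define x = Z_u^ℓ(G) and y = Z_u^{ℓ'}(G), and z_j = Z_{u,v}^{ℓ,j}(G \ uv) for j ∈ [k] (note z_j does not depend on the colour assigned to the isolated vertex u in G \ uv). Then x − y = (1 − w_{uv})·(z_{ℓ'} − z_ℓ). -/
open Classical in
/-- The Potts partition function restricted to colourings giving vertex `u` colour `ℓ`. -/
noncomputable def pottsRes1 {V : Type*} [Fintype V] (G : SimpleGraph V) (k : ℕ)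
    (w : Sym2 V → ℂ) (u : V) (ℓ : Fin k) : ℂ :=
  ∑ φ ∈ Finset.univ.filter (fun φ : V → Fin k => φ u = ℓ),
    ∏ e ∈ G.edgeSet.toFinite.toFinset, if (Sym2.map φ e).IsDiag then w e else 1

open Classical in
/-- The Potts partition function restricted to colourings giving `u` colour `ℓ`
and `v` colour `j`. -/
noncomputable def pottsRes2 {V : Type*} [Fintype V] (G : SimpleGraph V) (k : ℕ)
    (w : Sym2 V → ℂ) (u v : V) (ℓ j : Fin k) : ℂ :=
  ∑ φ ∈ Finset.univ.filter (fun φ : V → Fin k => φ u = ℓ ∧ φ v = j),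
    ∏ e ∈ G.edgeSet.toFinite.toFinset, if (Sym2.map φ e).IsDiag then w e else 1

open Classical in
lemma lemA {V : Type*} [Fintype V] (G : SimpleGraph V) (k : ℕ)
    (w : Sym2 V → ℂ) (u v : V) (ℓ : Fin k) :
    pottsRes1 G k w u ℓ = ∑ j, pottsRes2 G k w u v ℓ j := by
  rw [pottsRes1, ← Finset.sum_fiberwise _ (fun φ : V → Fin k => φ v)]
  refine Finset.sum_congr rfl fun j _ => ?_
  rw [pottsRes2, Finset.filter_filter]

open Classical in
lemma lemB {V : Type*} [Fintype V] (G : SimpleGraph V) (k : ℕ)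
    (w : Sym2 V → ℂ) (u v : V) (huv : u ≠ v) (hadj : G.Adj u v) (ℓ j : Fin k) :
    pottsRes2 G k w u v ℓ j =
      (if j = ℓ then w s(u,v) else 1) * pottsRes2 (G.deleteEdges {s(u,v)}) k w u v ℓ j := by
  rw [pottsRes2, pottsRes2, Finset.mul_sum]
  refine Finset.sum_congr rfl fun φ hφ => ?_
  simp only [Finset.mem_filter] at hφ
  obtain ⟨-, hu, hv⟩ := hφ
  have hmem : s(u,v) ∈ G.edgeSet.toFinite.toFinset := by
    rw [Set.Finite.mem_toFinset]; exact hadj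
  have hset : (G.deleteEdges {s(u,v)}).edgeSet.toFinite.toFinset
      = G.edgeSet.toFinite.toFinset.erase s(u,v) := by
    ext e
    simp only [Set.Finite.mem_toFinset, SimpleGraph.edgeSet_deleteEdges, Set.mem_diff,
      Set.mem_singleton_iff, Finset.mem_erase]
    tauto
  rw [← Finset.mul_prod_erase _ _ hmem, hset]
  congr 1
  simp only [Sym2.map_pair_eq, Sym2.isDiag_iff_proj_eq, hu, hv]
  by_cases h : j = ℓ
  · simp [h]
  · simp [h, Ne.symm h]

open Classical in
lemma lemC {V : Type*} [Fintype V] (G : SimpleGraph V) (k : ℕ)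
    (w : Sym2 V → ℂ) (u v : V) (huv : u ≠ v)
    (hiso : ∀ e ∈ (G.deleteEdges {s(u,v)}).edgeSet, u ∉ e) (ℓ ℓ' j : Fin k) :
    pottsRes2 (G.deleteEdges {s(u,v)}) k w u v ℓ j =
      pottsRes2 (G.deleteEdges {s(u,v)}) k w u v ℓ' j := by
  rw [pottsRes2, pottsRes2]
  refine Finset.sum_bij' (fun φ _ => Function.update φ u ℓ')
    (fun φ _ => Function.update φ u ℓ) ?_ ?_ ?_ ?_ ?_
  · intro φ hφ
    simp only [Finset.mem_filter, Finset.mem_univ, true_and] at hφ ⊢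
    exact ⟨Function.update_self _ _ _, by rw [Function.update_of_ne (Ne.symm huv)]; exact hφ.2⟩
  · intro φ hφ
    simp only [Finset.mem_filter, Finset.mem_univ, true_and] at hφ ⊢
    exact ⟨Function.update_self _ _ _, by rw [Function.update_of_ne (Ne.symm huv)]; exact hφ.2⟩
  · intro φ hφ
    simp only [Finset.mem_filter, Finset.mem_univ, true_and] at hφ
    funext x
    by_cases hx : x = u
    · subst hx; simp [hφ.1]
    · simp [Function.update_of_ne hx]
  · intro φ hφ
    simp only [Finset.mem_filter, Finset.mem_univ, true_and] at hφ
    funext x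
    by_cases hx : x = u
    · subst hx; simp [hφ.1]
    · simp [Function.update_of_ne hx]
  · intro φ hφ
    refine Finset.prod_congr rfl fun e he => ?_
    simp only [Set.Finite.mem_toFinset] at he
    have hu := hiso e he
    induction e with
    | h a b =>
      have ha : a ≠ u := fun h => hu (h ▸ Sym2.mem_mk_left a b)
      have hb : b ≠ u := fun h => hu (h ▸ Sym2.mem_mk_right a b)
      simp [Function.update_of_ne ha, Function.update_of_ne hb]

theorem telescoping_difference {V : Type*} [Fintype V] (G : SimpleGraph V)
    (k : ℕ) (hk : 0 < k) (w : Sym2 V → ℂ) (u v : V)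
    (hadj : G.Adj u v) (huniq : ∀ x, G.Adj u x → x = v)
    (ℓ ℓ' : Fin k) (hne : ℓ ≠ ℓ') :
    pottsRes1 G k w u ℓ - pottsRes1 G k w u ℓ' =
      (1 - w s(u, v)) *
        (pottsRes2 (G.deleteEdges {s(u, v)}) k w u v ℓ ℓ' -
          pottsRes2 (G.deleteEdges {s(u, v)}) k w u v ℓ ℓ) := by
  classical
  have huv : u ≠ v := hadj.ne
  have hiso : ∀ e ∈ (G.deleteEdges {s(u,v)}).edgeSet, u ∉ e := by
    intro e he hu
    rw [SimpleGraph.edgeSet_deleteEdges] at he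
    obtain ⟨heG, hne'⟩ := he
    obtain ⟨x, rfl⟩ := Sym2.mem_iff_exists.mp hu
    have : G.Adj u x := heG
    exact hne' (by rw [huniq x this]; exact rfl)
  set z : Fin k → ℂ := fun j => pottsRes2 (G.deleteEdges {s(u,v)}) k w u v ℓ j with hz
  have key : ∀ c : Fin k, pottsRes1 G k w u c = ∑ j, (if j = c then w s(u,v) else 1) * z j := by
    intro c
    rw [lemA G k w u v c]
    refine Finset.sum_congr rfl fun j _ => ?_
    rw [lemB G k w u v huv hadj c j, hz]
    congr 1
    exact lemC G k w u v huv hiso c ℓ j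
  rw [key ℓ, key ℓ', ← Finset.sum_sub_distrib]
  rw [Finset.sum_eq_add_of_mem ℓ ℓ' (Finset.mem_univ _) (Finset.mem_univ _) hne ?_]
  · simp [hne, Ne.symm hne]
    ring
  · intro c _ hc
    simp only [if_neg hc.1, if_neg hc.2]
    ring
end
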